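/- arXiv:math/0510071 — 2 statements merged into one kernel-verified Lean document; each statement's English description precedes it below -/
import Mathlib

section
/- Let U : L²(𝕋²) → L²(𝕋²) be a unitary operator that maps C^∞ functions to C^∞ functions and commutes with ∂/∂x₁ and ∂/∂x₂ on C^∞ functions. Let 0 < δ < 1, let ν be a C^∞ function on 𝕋² with |ν| ≤ δ everywhere, and let f be a C^∞ function on 𝕋². Then for every k ≥ 1 and r ∈ {1,2}, denoting by (U∘M_ν)^k f the k-fold application of u ↦ U(ν·u) to f, one has ‖∂/∂x_r ((U∘M_ν)^k f)‖_{L²} ≤ (δ + max|∂ν/∂x_r|)·k·δ^{k−1}·(‖f‖²_{L²} + ‖∂f/∂x₁‖²_{L²} + ‖∂f/∂x₂‖²_{L²})^{1/2}. -/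
open MeasureTheory

instance : Fact ((0:ℝ) < 2 * Real.pi) := ⟨by positivity⟩

/-- The two-torus `𝕋² = ℝ²/2πℤ²`. -/
abbrev T2 : Type := AddCircle (2 * Real.pi) × AddCircle (2 * Real.pi)

/-- The canonical projection `ℝ² → 𝕋²`. -/
noncomputable def projT2 : ℝ × ℝ → T2 := fun p => (↑p.1, ↑p.2)

lemma projT2_surjective : Function.Surjective projT2 := by
  rintro ⟨x, y⟩
  obtain ⟨a, ha⟩ := QuotientAddGroup.mk_surjective x
  obtain ⟨b, hb⟩ := QuotientAddGroup.mk_surjective y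
  exact ⟨(a, b), by simp [projT2, ha, hb]⟩

/-- A choice of lift `𝕋² → ℝ²` (a set-theoretic section of `projT2`). -/
noncomputable def liftT2 : T2 → ℝ × ℝ := Function.surjInv projT2_surjective

/-- A function on the torus is `C^∞` iff its (doubly periodic) lift to `ℝ²` is `C^∞`. -/
def SmoothT2 (F : T2 → ℂ) : Prop := ContDiff ℝ (⊤ : ℕ∞) (F ∘ projT2)

/-- The partial derivative `∂F/∂x₁` of a function on the torus. -/
noncomputable def pd1 (F : T2 → ℂ) : T2 → ℂ := fun q =>
  fderiv ℝ (F ∘ projT2) (liftT2 q) (1, 0)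

/-- The partial derivative `∂F/∂x₂` of a function on the torus. -/
noncomputable def pd2 (F : T2 → ℂ) : T2 → ℂ := fun q =>
  fderiv ℝ (F ∘ projT2) (liftT2 q) (0, 1)

/-- `∂_z = (1/2)(∂/∂x₁ − i ∂/∂x₂)` on the torus (`z = x₁ + i x₂`). -/
noncomputable def dzT2 (F : T2 → ℂ) : T2 → ℂ := fun q =>
  (pd1 F q - Complex.I * pd2 F q) / 2

/-- `∂_z̄ = (1/2)(∂/∂x₁ + i ∂/∂x₂)` on the torus (`z = x₁ + i x₂`). -/
noncomputable def dzbarT2 (F : T2 → ℂ) : T2 → ℂ := fun q =>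
  (pd1 F q + Complex.I * pd2 F q) / 2

/-- The character `e_n(x) = e^{i(n₁x₁+n₂x₂)}` on the torus, `n ∈ ℤ²`. -/
noncomputable def eT2 (n : ℤ × ℤ) : T2 → ℂ := fun q =>
  Complex.exp (Complex.I * ((n.1 : ℂ) * ((liftT2 q).1 : ℂ) + (n.2 : ℂ) * ((liftT2 q).2 : ℂ)))

/-- The complex `L²` space of the torus. -/
abbrev L2T2 : Type := Lp ℂ 2 (volume : Measure T2)

/-- The squared `L²` norm `∫ |g|²` of a function on the torus. -/
noncomputable def l2sq (g : T2 → ℂ) : ℝ := ∫ q : T2, ‖g q‖ ^ 2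

/-- The first Sobolev norm `(‖g‖² + ‖∂g/∂x₁‖² + ‖∂g/∂x₂‖²)^{1/2}`. -/
noncomputable def sob1 (g : T2 → ℂ) : ℝ :=
  Real.sqrt (l2sq g + l2sq (pd1 g) + l2sq (pd2 g))

/-- A unitary operator `U` on `L²(𝕋²)` "maps `C^∞` functions to `C^∞` functions and
commutes with `∂/∂x₁` and `∂/∂x₂` on them": for every smooth `φ` there is a smooth
`ψ` (representing `U φ`) such that `U` sends (the class of) `φ` to `ψ` and (the
class of) `∂φ/∂x_r` to `∂ψ/∂x_r` for `r = 1, 2`. -/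
def SmoothCompat (U : L2T2 ≃ₗᵢ[ℂ] L2T2) : Prop :=
  ∀ φ : T2 → ℂ, SmoothT2 φ → ∃ ψ : T2 → ℂ, SmoothT2 ψ ∧
    (∀ g : L2T2, ⇑g =ᵐ[volume] φ → ⇑(U g) =ᵐ[volume] ψ) ∧
    (∀ g : L2T2, ⇑g =ᵐ[volume] pd1 φ → ⇑(U g) =ᵐ[volume] pd1 ψ) ∧
    (∀ g : L2T2, ⇑g =ᵐ[volume] pd2 φ → ⇑(U g) =ᵐ[volume] pd2 ψ)

/-!
Multiplication by `ν` shrinks `L²` norms by the factor `δ` and `U` preserves them, so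
`‖u k‖ ≤ δ ^ k ‖f‖`. Because `U` commutes with `∂ᵣ`, the Leibniz rule gives
`‖∂ᵣ u (k + 1)‖ ≤ Mᵣ ‖u k‖ + δ ‖∂ᵣ u k‖` with `Mᵣ = sup |∂ᵣ ν|`, and this linear recurrence
solves to `‖∂ᵣ u k‖ ≤ (δ + Mᵣ) k δ ^ (k - 1) ‖f‖_{H¹}`.
-/

lemma L2.sq_norm_eq_integral {α 𝕜 : Type*} [MeasurableSpace α] {μ : Measure α} [RCLike 𝕜]
    (g : Lp 𝕜 2 μ) : ‖g‖ ^ 2 = ∫ a, ‖g a‖ ^ 2 ∂μ := by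
  rw [@norm_sq_eq_re_inner 𝕜, L2.inner_def, ← integral_re (L2.integrable_inner g g)]
  exact integral_congr_ae (.of_forall fun a => inner_self_eq_norm_sq (g a))

lemma le_nat_mul_pow_pred_of_le_mul_add_mul {δ M S : ℝ} (hδ : 0 ≤ δ) (hM : 0 ≤ M) (hS : 0 ≤ S)
    {A B : ℕ → ℝ} (hA : ∀ k, A k ≤ δ ^ k * S) (hB0 : B 0 ≤ S)
    (hB : ∀ k, B (k + 1) ≤ M * A k + δ * B k) {k : ℕ} (hk : 1 ≤ k) :
    B k ≤ (δ + M) * k * δ ^ (k - 1) * S := by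
  have key : ∀ j : ℕ, B (j + 1) ≤ (δ ^ (j + 1) + (j + 1) * M * δ ^ j) * S := by
    intro j
    induction j with
    | zero =>
      have hMA := mul_le_mul_of_nonneg_left (hA 0) hM
      have hδB := mul_le_mul_of_nonneg_left hB0 hδ
      have := hB 0
      simp only [pow_zero, one_mul, zero_add, pow_one, Nat.cast_zero] at *
      linarith
    | succ j ih =>
      have hMA := mul_le_mul_of_nonneg_left (hA (j + 1)) hM
      have hδB := mul_le_mul_of_nonneg_left ih hδ
      calc B (j + 1 + 1) ≤ M * A (j + 1) + δ * B (j + 1) := hB (j + 1)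
        _ ≤ (δ ^ (j + 1 + 1) + ((j + 1 : ℕ) + 1) * M * δ ^ (j + 1)) * S := by
          push_cast; linear_combination hMA + hδB
  obtain ⟨j, rfl⟩ := Nat.exists_eq_add_of_le' hk
  have hj : 0 ≤ j * δ ^ (j + 1) * S := by positivity
  calc B (j + 1) ≤ (δ ^ (j + 1) + (j + 1) * M * δ ^ j) * S := key j
    _ ≤ (δ + M) * ↑(j + 1) * δ ^ (j + 1 - 1) * S := by
      simp only [Nat.add_sub_cancel]; push_cast; linear_combination hj

/-- `pd1 = pdT2 (1, 0)` and `pd2 = pdT2 (0, 1)` hold definitionally. -/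
noncomputable def pdT2 (v : ℝ × ℝ) (F : T2 → ℂ) : T2 → ℂ := fun q =>
  fderiv ℝ (F ∘ projT2) (liftT2 q) v

lemma isOpenQuotientMap_projT2 : IsOpenQuotientMap projT2 :=
  QuotientAddGroup.isOpenQuotientMap_mk.prodMap QuotientAddGroup.isOpenQuotientMap_mk

lemma projT2_liftT2 (q : T2) : projT2 (liftT2 q) = q :=
  Function.surjInv_eq projT2_surjective q

lemma projT2_add (a b : ℝ × ℝ) : projT2 (a + b) = projT2 a + projT2 b := rfl

lemma projT2_sub (a b : ℝ × ℝ) : projT2 (a - b) = projT2 a - projT2 b := rfl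

lemma SmoothT2.continuous {F : T2 → ℂ} (hF : SmoothT2 F) : Continuous F :=
  isOpenQuotientMap_projT2.isQuotientMap.continuous_iff.2 (ContDiff.continuous hF)

lemma SmoothT2.mul {φ ψ : T2 → ℂ} (hφ : SmoothT2 φ) (hψ : SmoothT2 ψ) :
    SmoothT2 (fun q => φ q * ψ q) :=
  ContDiff.mul hφ hψ

lemma fderiv_comp_projT2_liftT2 (F : T2 → ℂ) (x : ℝ × ℝ) :
    fderiv ℝ (F ∘ projT2) (liftT2 (projT2 x)) = fderiv ℝ (F ∘ projT2) x := by
  set c := liftT2 (projT2 x) - x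
  have hc : projT2 c = 0 := by rw [projT2_sub, projT2_liftT2, sub_self]
  have hperiodic : (fun y => (F ∘ projT2) (y + c)) = F ∘ projT2 := by
    funext y
    simp only [Function.comp_apply, projT2_add, hc, add_zero]
  calc fderiv ℝ (F ∘ projT2) (liftT2 (projT2 x)) = fderiv ℝ (F ∘ projT2) (x + c) := by
        rw [add_sub_cancel]
    _ = fderiv ℝ (fun y => (F ∘ projT2) (y + c)) x := (fderiv_comp_add_right c).symm
    _ = fderiv ℝ (F ∘ projT2) x := by rw [hperiodic]

lemma pdT2_comp_projT2 (v : ℝ × ℝ) (F : T2 → ℂ) :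
    pdT2 v F ∘ projT2 = fun x => fderiv ℝ (F ∘ projT2) x v := by
  funext x
  simp only [Function.comp_apply, pdT2, fderiv_comp_projT2_liftT2]

lemma SmoothT2.continuous_pdT2 {F : T2 → ℂ} (hF : SmoothT2 F) (v : ℝ × ℝ) :
    Continuous (pdT2 v F) := by
  refine isOpenQuotientMap_projT2.isQuotientMap.continuous_iff.2 ?_
  rw [pdT2_comp_projT2]
  exact (ContDiff.continuous_fderiv hF (by norm_num)).clm_apply continuous_const

lemma pdT2_mul {φ ψ : T2 → ℂ} (hφ : SmoothT2 φ) (hψ : SmoothT2 ψ) (v : ℝ × ℝ) (q : T2) :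
    pdT2 v (fun q => φ q * ψ q) q = pdT2 v φ q * ψ q + φ q * pdT2 v ψ q := by
  have hφ' : DifferentiableAt ℝ (φ ∘ projT2) (liftT2 q) :=
    (ContDiff.differentiable hφ (by norm_num)).differentiableAt
  have hψ' : DifferentiableAt ℝ (ψ ∘ projT2) (liftT2 q) :=
    (ContDiff.differentiable hψ (by norm_num)).differentiableAt
  change fderiv ℝ (fun x => (φ ∘ projT2) x * (ψ ∘ projT2) x) (liftT2 q) v = _
  rw [fderiv_fun_mul hφ' hψ']
  simp only [add_apply, smul_apply, smul_eq_mul, Function.comp_apply, projT2_liftT2, pdT2]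
  ring

lemma memLp_two_of_continuous {φ : T2 → ℂ} (hφ : Continuous φ) : MemLp φ 2 volume :=
  hφ.memLp_of_hasCompactSupport (HasCompactSupport.of_compactSpace φ)

lemma sqrt_l2sq_eq_norm (g : L2T2) {φ : T2 → ℂ} (h : ⇑g =ᵐ[volume] φ) : √(l2sq φ) = ‖g‖ := by
  have hφ : l2sq φ = ∫ q, ‖g q‖ ^ 2 := integral_congr_ae (h.mono fun q hq => by rw [hq]) |>.symm
  rw [hφ, ← L2.sq_norm_eq_integral, Real.sqrt_sq (norm_nonneg g)]

lemma sqrt_l2sq_eq_norm_toLp {φ : T2 → ℂ} (hφ : Continuous φ) :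
    √(l2sq φ) = ‖(memLp_two_of_continuous hφ).toLp φ‖ :=
  sqrt_l2sq_eq_norm _ (memLp_two_of_continuous hφ).coeFn_toLp

lemma sqrt_l2sq_add_le {φ ψ : T2 → ℂ} (hφ : Continuous φ) (hψ : Continuous ψ) :
    √(l2sq (fun q => φ q + ψ q)) ≤ √(l2sq φ) + √(l2sq ψ) := by
  rw [sqrt_l2sq_eq_norm_toLp (φ := fun q => φ q + ψ q) (hφ.add hψ), sqrt_l2sq_eq_norm_toLp hφ,
    sqrt_l2sq_eq_norm_toLp hψ]
  exact (norm_add_le _ _).trans_eq'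
    (congrArg norm (MemLp.toLp_add (memLp_two_of_continuous hφ) (memLp_two_of_continuous hψ)))

lemma sqrt_l2sq_le_mul {φ ψ : T2 → ℂ} (hφ : Continuous φ) (hψ : Continuous ψ) {C : ℝ}
    (h : ∀ q, ‖φ q‖ ≤ C * ‖ψ q‖) : √(l2sq φ) ≤ C * √(l2sq ψ) := by
  rw [sqrt_l2sq_eq_norm_toLp hφ, sqrt_l2sq_eq_norm_toLp hψ]
  refine Lp.norm_le_mul_norm_of_ae_le_mul ?_
  filter_upwards [(memLp_two_of_continuous hφ).coeFn_toLp,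
    (memLp_two_of_continuous hψ).coeFn_toLp] with q hφq hψq
  rw [hφq, hψq]
  exact h q

lemma sqrt_l2sq_mul_le {ν u : T2 → ℂ} (hν : Continuous ν) (hu : Continuous u) {δ : ℝ}
    (hνb : ∀ q, ‖ν q‖ ≤ δ) : √(l2sq (fun q => ν q * u q)) ≤ δ * √(l2sq u) :=
  sqrt_l2sq_le_mul (hν.mul hu) hu fun q =>
    (norm_mul _ _).trans_le (mul_le_mul_of_nonneg_right (hνb q) (norm_nonneg _))

lemma sqrt_l2sq_pdT2_mul_le {ν u : T2 → ℂ} (hν : SmoothT2 ν) (hu : SmoothT2 u) {δ M : ℝ}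
    (hνb : ∀ q, ‖ν q‖ ≤ δ) (v : ℝ × ℝ) (hM : ∀ q, ‖pdT2 v ν q‖ ≤ M) :
    √(l2sq (pdT2 v (fun q => ν q * u q))) ≤ M * √(l2sq u) + δ * √(l2sq (pdT2 v u)) := by
  rw [funext (pdT2_mul hν hu v)]
  exact (sqrt_l2sq_add_le ((hν.continuous_pdT2 v).mul hu.continuous)
    (hν.continuous.mul (hu.continuous_pdT2 v))).trans
    (add_le_add (sqrt_l2sq_mul_le (hν.continuous_pdT2 v) hu.continuous hM)
      (sqrt_l2sq_mul_le hν.continuous (hu.continuous_pdT2 v) hνb))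

lemma sqrt_l2sq_eq_of_isometry (U : L2T2 ≃ₗᵢ[ℂ] L2T2) {φ ψ : T2 → ℂ} (hφ : Continuous φ)
    (h : ∀ g : L2T2, ⇑g =ᵐ[volume] φ → ⇑(U g) =ᵐ[volume] ψ) : √(l2sq ψ) = √(l2sq φ) := by
  have hφ' := (memLp_two_of_continuous hφ).coeFn_toLp
  rw [sqrt_l2sq_eq_norm _ (h _ hφ'), LinearIsometryEquiv.norm_map, sqrt_l2sq_eq_norm _ hφ']

/-- `U φ` is determined only almost everywhere; continuity of `ψ` identifies it with the smooth
representative provided by `SmoothCompat`, whose derivatives `U` controls. -/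
lemma SmoothCompat.sqrt_l2sq_pd_eq {U : L2T2 ≃ₗᵢ[ℂ] L2T2} (hU : SmoothCompat U) {φ ψ : T2 → ℂ}
    (hφ : SmoothT2 φ) (hψ : Continuous ψ)
    (h : ∀ g : L2T2, ⇑g =ᵐ[volume] φ → ⇑(U g) =ᵐ[volume] ψ) :
    √(l2sq (pd1 ψ)) = √(l2sq (pd1 φ)) ∧ √(l2sq (pd2 ψ)) = √(l2sq (pd2 φ)) := by
  obtain ⟨ψ', hψ', h0, h1, h2⟩ := hU φ hφ
  have hφ' := (memLp_two_of_continuous hφ.continuous).coeFn_toLp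
  obtain rfl : ψ = ψ' :=
    (hψ.ae_eq_iff_eq volume hψ'.continuous).1 ((h _ hφ').symm.trans (h0 _ hφ'))
  exact ⟨sqrt_l2sq_eq_of_isometry U (hφ.continuous_pdT2 (1, 0)) h1,
    sqrt_l2sq_eq_of_isometry U (hφ.continuous_pdT2 (0, 1)) h2⟩

lemma l2sq_nonneg (φ : T2 → ℂ) : 0 ≤ l2sq φ :=
  integral_nonneg fun _ => sq_nonneg _

lemma sqrt_l2sq_le_sob1 (f : T2 → ℂ) : √(l2sq f) ≤ sob1 f :=
  Real.sqrt_le_sqrt (by linarith [l2sq_nonneg (pd1 f), l2sq_nonneg (pd2 f)])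

lemma sqrt_l2sq_pd1_le_sob1 (f : T2 → ℂ) : √(l2sq (pd1 f)) ≤ sob1 f :=
  Real.sqrt_le_sqrt (by linarith [l2sq_nonneg f, l2sq_nonneg (pd2 f)])

lemma sqrt_l2sq_pd2_le_sob1 (f : T2 → ℂ) : √(l2sq (pd2 f)) ≤ sob1 f :=
  Real.sqrt_le_sqrt (by linarith [l2sq_nonneg f, l2sq_nonneg (pd1 f)])

theorem iterate_derivative_bound_general
    (U : L2T2 ≃ₗᵢ[ℂ] L2T2) (hU : SmoothCompat U)
    (δ : ℝ)
    (ν : T2 → ℂ) (hν : SmoothT2 ν) (hνb : ∀ q : T2, ‖ν q‖ ≤ δ)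
    (f : T2 → ℂ)
    (u : ℕ → T2 → ℂ) (hu0 : u 0 = f) (husmooth : ∀ k, SmoothT2 (u k))
    (hiter : ∀ k : ℕ, ∀ g : L2T2, ⇑g =ᵐ[volume] (fun q => ν q * u k q) →
      ⇑(U g) =ᵐ[volume] u (k + 1)) :
    ∀ k : ℕ, 1 ≤ k →
      Real.sqrt (l2sq (pd1 (u k))) ≤
        (δ + ⨆ q : T2, ‖pd1 ν q‖) * k * δ ^ (k - 1) * sob1 f ∧
      Real.sqrt (l2sq (pd2 (u k))) ≤
        (δ + ⨆ q : T2, ‖pd2 ν q‖) * k * δ ^ (k - 1) * sob1 f := by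
  subst hu0
  have hδ : 0 ≤ δ := (norm_nonneg _).trans (hνb 0)
  have hνu k : SmoothT2 (fun q => ν q * u k q) := hν.mul (husmooth k)
  have hA k : √(l2sq (u k)) ≤ δ ^ k * sob1 (u 0) := by
    refine (le_geom (u := fun k => √(l2sq (u k))) hδ k fun j _ => ?_).trans
      (mul_le_mul_of_nonneg_left (sqrt_l2sq_le_sob1 _) (pow_nonneg hδ k))
    rw [sqrt_l2sq_eq_of_isometry U (hνu j).continuous (hiter j)]
    exact sqrt_l2sq_mul_le hν.continuous (husmooth j).continuous hνb
  have hpd k := hU.sqrt_l2sq_pd_eq (hνu k) (husmooth (k + 1)).continuous (hiter k)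
  have hsup v q : ‖pdT2 v ν q‖ ≤ ⨆ q, ‖pdT2 v ν q‖ :=
    le_ciSup (isCompact_range (hν.continuous_pdT2 v).norm).bddAbove q
  have hbound v k (hk : 1 ≤ k) (hB0 : √(l2sq (pdT2 v (u 0))) ≤ sob1 (u 0))
      (hB : ∀ j, √(l2sq (pdT2 v (u (j + 1)))) = √(l2sq (pdT2 v (fun q => ν q * u j q)))) :
      √(l2sq (pdT2 v (u k))) ≤ (δ + ⨆ q, ‖pdT2 v ν q‖) * k * δ ^ (k - 1) * sob1 (u 0) :=
    le_nat_mul_pow_pred_of_le_mul_add_mul (B := fun k => √(l2sq (pdT2 v (u k)))) hδ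
      ((norm_nonneg _).trans (hsup v 0)) (Real.sqrt_nonneg _) hA hB0
      (fun j => (hB j).trans_le (sqrt_l2sq_pdT2_mul_le hν (husmooth j) hνb v (hsup v))) hk
  exact fun k hk => ⟨hbound (1, 0) k hk (sqrt_l2sq_pd1_le_sob1 _) fun j => (hpd j).1,
    hbound (0, 1) k hk (sqrt_l2sq_pd2_le_sob1 _) fun j => (hpd j).2⟩

/-- **Derivative bound for the iterates `(U∘M_ν)^k f` (estimate (2.9)).**
Let `U` be a unitary operator on `L²(𝕋²)` mapping `C^∞` functions to `C^∞`
functions and commuting with `∂/∂x₁`, `∂/∂x₂`, let `0 < δ < 1`, `ν` be `C^∞` with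
`|ν| ≤ δ`, and `f` be `C^∞`. If `u k` are smooth representatives of the iterates
`(U ∘ M_ν)^k f` (`u 0 = f`, `u (k+1) = U(ν · u k)`), then for every `k ≥ 1` and
`r ∈ {1,2}`,
`‖∂/∂x_r (u k)‖_{L²} ≤ (δ + max|∂ν/∂x_r|) · k · δ^{k−1} · ‖f‖_{H¹}`. -/
theorem iterate_derivative_bound
    (U : L2T2 ≃ₗᵢ[ℂ] L2T2) (hU : SmoothCompat U)
    (δ : ℝ) (hδ0 : 0 < δ) (hδ1 : δ < 1)
    (ν : T2 → ℂ) (hν : SmoothT2 ν) (hνb : ∀ q : T2, ‖ν q‖ ≤ δ)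
    (f : T2 → ℂ) (hf : SmoothT2 f)
    (u : ℕ → T2 → ℂ) (hu0 : u 0 = f) (husmooth : ∀ k, SmoothT2 (u k))
    (hiter : ∀ k : ℕ, ∀ g : L2T2, ⇑g =ᵐ[volume] (fun q => ν q * u k q) →
      ⇑(U g) =ᵐ[volume] u (k + 1)) :
    ∀ k : ℕ, 1 ≤ k →
      Real.sqrt (l2sq (pd1 (u k))) ≤
        (δ + ⨆ q : T2, ‖pd1 ν q‖) * k * δ ^ (k - 1) * sob1 f ∧
      Real.sqrt (l2sq (pd2 (u k))) ≤
        (δ + ⨆ q : T2, ‖pd2 ν q‖) * k * δ ^ (k - 1) * sob1 f :=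
  iterate_derivative_bound_general U hU δ ν hν hνb f u hu0 husmooth hiter
end

section
/- (Weyl-type lemma.) Let U ⊆ ℂ be open and let Φ : U → ℂ be a continuous function that has locally L² distributional derivatives and satisfies ∂Φ/∂z̄ = 0 almost everywhere on U. Then Φ is holomorphic on U. -/
/-!
Mollify. For a bump `ρ` supported in a small ball around `0`, the real derivative of `ρ ⋆ Φ` at
`x` in a direction `v` is `-∫ Φ ∂ᵥφ` for the test function `φ = ρ (x - ·)`. The weak equations
turn this into `∫ g φ` for `v = 1` and `∫ h φ` for `v = i`, and `h = i g` a.e. gives the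
Cauchy–Riemann equation, so every mollification is holomorphic near the point. As the bumps
shrink, the mollifications of the continuous `Φ` converge to it locally uniformly, and a locally
uniform limit of holomorphic functions is holomorphic.
-/

open MeasureTheory

/-- The Wirtinger derivative `∂f/∂z = (1/2)(∂f/∂x − i ∂f/∂y)` of `f` at `z`,
where `∂f/∂x`, `∂f/∂y` are the directional derivatives in directions `1`, `i`. -/
noncomputable def wderiv (f : ℂ → ℂ) (z : ℂ) : ℂ :=
  (fderiv ℝ f z 1 - Complex.I * fderiv ℝ f z Complex.I) / 2

/-- The Wirtinger derivative `∂f/∂z̄ = (1/2)(∂f/∂x + i ∂f/∂y)` of `f` at `z`. -/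
noncomputable def wderivBar (f : ℂ → ℂ) (z : ℂ) : ℂ :=
  (fderiv ℝ f z 1 + Complex.I * fderiv ℝ f z Complex.I) / 2

/-- `g` is locally square-integrable on `U`. -/
def LocallyL2On (U : Set ℂ) (g : ℂ → ℂ) : Prop :=
  ∀ K : Set ℂ, K ⊆ U → IsCompact K → IntegrableOn (fun z => ‖g z‖ ^ 2) K volume

/-- `Φ` has locally `L²` distributional derivatives `g` (in direction `1`) and `h`
(in direction `i`) on the open set `U`: for every `C^∞` compactly supported test
function `φ` with support in `U`, `∫ Φ ∂φ/∂x = −∫ g φ` and `∫ Φ ∂φ/∂y = −∫ h φ`.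
The distributional Wirtinger derivatives are then `∂Φ/∂z = (g − i h)/2` and
`∂Φ/∂z̄ = (g + i h)/2`. -/
def HasWeakDerivsOn (U : Set ℂ) (Φ g h : ℂ → ℂ) : Prop :=
  LocallyL2On U g ∧ LocallyL2On U h ∧
    ∀ φ : ℂ → ℂ, ContDiff ℝ (⊤ : ℕ∞) φ → HasCompactSupport φ → tsupport φ ⊆ U →
      ((∫ z in U, Φ z * fderiv ℝ φ z 1 ∂volume) = -∫ z in U, g z * φ z ∂volume) ∧
      ((∫ z in U, Φ z * fderiv ℝ φ z Complex.I ∂volume) = -∫ z in U, h z * φ z ∂volume)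

open Metric Set Filter ContinuousLinearMap
open scoped Convolution Topology

theorem tendstoLocallyUniformlyOn_of_tendsto_uncurry {ι α β : Type*} [TopologicalSpace α]
    [UniformSpace β] {F : ι → α → β} {f : α → β} {p : Filter ι} {s : Set α} (hs : IsOpen s)
    (hf : ContinuousOn f s) (hF : ∀ x ∈ s, Tendsto (Function.uncurry F) (p ×ˢ 𝓝 x) (𝓝 (f x))) :
    TendstoLocallyUniformlyOn F f p s :=
  hs.tendstoLocallyUniformlyOn_iff_forall_tendsto.2 fun x hx =>
    (((hf.continuousAt (hs.mem_nhds hx)).tendsto.comp tendsto_snd).prodMk_nhds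
      (hF x hx)).mono_right (nhds_le_uniformity _)

theorem fderiv_ofReal_comp_const_sub_apply {G : Type*} [NormedAddCommGroup G] [NormedSpace ℝ G]
    {ρ : G → ℝ} {x t : G} (hρ : DifferentiableAt ℝ ρ (x - t)) (v : G) :
    fderiv ℝ (fun s => (ρ (x - s) : ℂ)) t v = -(fderiv ℝ ρ (x - t) v : ℂ) := by
  have : HasFDerivAt (fun s => (ρ (x - s) : ℂ)) _ t :=
    Complex.ofRealCLM.hasFDerivAt.comp t (hρ.hasFDerivAt.comp t ((hasFDerivAt_id t).const_sub x))
  rw [this.fderiv]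
  simp

noncomputable def ContDiffBump.shrinkingSeq {G : Type*} [NormedAddCommGroup G] (n : ℕ) :
    ContDiffBump (0 : G) where
  rIn := 1 / (n + 2)
  rOut := 1 / (n + 1)
  rIn_pos := by positivity
  rIn_lt_rOut := by gcongr; linarith

theorem ContDiffBump.tendsto_shrinkingSeq_rOut {G : Type*} [NormedAddCommGroup G] :
    Tendsto (fun n => (shrinkingSeq n : ContDiffBump (0 : G)).rOut) atTop (𝓝 0) :=
  tendsto_one_div_add_atTop_nhds_zero_nat

section Mollifier

variable {G : Type*} [NormedAddCommGroup G] [NormedSpace ℝ G] [FiniteDimensional ℝ G]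
  [MeasurableSpace G] [BorelSpace G] {μ : Measure G} [μ.IsAddHaarMeasure]

theorem HasCompactSupport.fderiv_convolution_apply {E : Type*} [NormedAddCommGroup E]
    [NormedSpace ℝ E] {ρ : G → ℝ} {f : G → E} (hρ : HasCompactSupport ρ) (hρ1 : ContDiff ℝ 1 ρ)
    (hf : LocallyIntegrable f μ) (x v : G) :
    fderiv ℝ (ρ ⋆[lsmul ℝ ℝ, μ] f) x v = ∫ t, fderiv ℝ ρ (x - t) v • f t ∂μ := by
  rw [← convolution_flip, (hρ.hasFDerivAt_convolution_right _ hf hρ1 x).fderiv,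
    convolution_precompR_apply _ hf (hρ.fderiv ℝ) (hρ1.continuous_fderiv one_ne_zero),
    convolution_def]
  rfl

namespace ContDiffBump

theorem tendstoLocallyUniformlyOn_normed_convolution {E : Type*} [NormedAddCommGroup E]
    [NormedSpace ℝ E] [CompleteSpace E] {ι : Type*} {φ : ι → ContDiffBump (0 : G)} {l : Filter ι}
    (hφ : Tendsto (fun i => (φ i).rOut) l (𝓝 0)) {f : G → E} {s : Set G}
    (hmf : AEStronglyMeasurable f μ) (hs : IsOpen s) (hf : ContinuousOn f s) :
    TendstoLocallyUniformlyOn (fun i => (φ i).normed μ ⋆[lsmul ℝ ℝ, μ] f) f l s :=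
  tendstoLocallyUniformlyOn_of_tendsto_uncurry hs hf fun _ hx =>
    convolution_tendsto_right (hφ.comp tendsto_fst) (.of_forall fun _ => hmf)
      ((hf.continuousAt (hs.mem_nhds hx)).tendsto.comp tendsto_snd) tendsto_snd

theorem tsupport_ofReal_normed_comp_const_sub (b : ContDiffBump (0 : G)) (x : G) :
    tsupport (fun s => (b.normed μ (x - s) : ℂ)) = closedBall x b.rOut := by
  rw [show (fun s => (b.normed μ (x - s) : ℂ)) = (↑) ∘ b.normed μ ∘ Homeomorph.subLeft x from rfl,
    tsupport_comp_eq Complex.ofReal_eq_zero, tsupport_comp_eq_preimage, b.tsupport_normed_eq]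
  ext s
  simp [dist_eq_norm, norm_sub_rev]

theorem fderiv_normed_convolution_apply_eq_neg_setIntegral (b : ContDiffBump (0 : G))
    {U : Set G} (hU : MeasurableSet U) {Φ f : G → ℂ} {x : G} (hxU : closedBall x b.rOut ⊆ U)
    (hf : LocallyIntegrable f μ) (hfΦ : EqOn f Φ (closedBall x b.rOut)) (v : G) :
    fderiv ℝ (b.normed μ ⋆[lsmul ℝ ℝ, μ] f) x v =
      -∫ t in U, Φ t * fderiv ℝ (fun s => (b.normed μ (x - s) : ℂ)) t v ∂μ := by
  rw [b.hasCompactSupport_normed.fderiv_convolution_apply b.contDiff_normed hf, ← integral_neg,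
    ← integral_indicator hU]
  refine integral_congr_ae (.of_forall fun t => ?_)
  dsimp only
  by_cases ht : t ∈ closedBall x b.rOut
  · rw [indicator_of_mem (hxU ht), hfΦ ht,
      fderiv_ofReal_comp_const_sub_apply
        ((b.contDiff_normed (n := 1)).differentiable one_ne_zero _)]
    simp [Complex.real_smul, mul_comm]
  · have hρ : fderiv ℝ (b.normed μ) (x - t) = 0 := by
      refine fderiv_of_notMem_tsupport ℝ ?_
      rw [b.tsupport_normed_eq]
      simpa [dist_eq_norm, norm_sub_rev] using ht
    have hφ : fderiv ℝ (fun s => (b.normed μ (x - s) : ℂ)) t = 0 := by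
      refine fderiv_of_notMem_tsupport ℝ ?_
      rwa [b.tsupport_ofReal_normed_comp_const_sub]
    rw [hρ, zero_apply, zero_smul, eq_comm, indicator_apply_eq_zero, hφ]
    simp

end ContDiffBump

end Mollifier

theorem ContDiffBump.differentiableAt_normed_convolution_of_hasWeakDerivsOn
    {U : Set ℂ} (hU : MeasurableSet U) {Φ g h f : ℂ → ℂ} (hweak : HasWeakDerivsOn U Φ g h)
    (hdbar : ∀ᵐ z ∂(volume.restrict U), (g z + Complex.I * h z) / 2 = 0)
    (b : ContDiffBump (0 : ℂ)) {x : ℂ} (hxU : closedBall x b.rOut ⊆ U)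
    (hf : LocallyIntegrable f) (hfΦ : EqOn f Φ (closedBall x b.rOut)) :
    DifferentiableAt ℂ (b.normed volume ⋆[lsmul ℝ ℝ] f) x := by
  set φ : ℂ → ℂ := fun s => (b.normed volume (x - s) : ℂ)
  have hφ : ContDiff ℝ (⊤ : ℕ∞) φ :=
    Complex.ofRealCLM.contDiff.comp (b.contDiff_normed.comp (contDiff_const.sub contDiff_id))
  have hφ_tsupport := b.tsupport_ofReal_normed_comp_const_sub (μ := volume) x
  obtain ⟨hg, hh⟩ := hweak.2.2 φ hφ
    (hφ_tsupport ▸ isCompact_closedBall x b.rOut : IsCompact (tsupport φ))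
    (hφ_tsupport.trans_subset hxU)
  have hh_eq : ∀ᵐ z ∂(volume.restrict U), h z * φ z = Complex.I * (g z * φ z) :=
    hdbar.mono fun z hz => by
      linear_combination (-2 * Complex.I * φ z) * hz + (h z * φ z) * Complex.I_sq
  refine differentiableAt_complex_iff_differentiableAt_real.2
    ⟨(b.hasCompactSupport_normed.hasFDerivAt_convolution_left _ b.contDiff_normed hf
      x).differentiableAt, ?_⟩
  rw [b.fderiv_normed_convolution_apply_eq_neg_setIntegral hU hxU hf hfΦ,
    b.fderiv_normed_convolution_apply_eq_neg_setIntegral hU hxU hf hfΦ, hg, hh,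
    neg_neg, neg_neg, integral_congr_ae hh_eq, integral_const_mul, smul_eq_mul]

/-- **Weyl-type lemma.** A continuous function on an open `U ⊆ ℂ` with locally `L²`
distributional derivatives satisfying `∂Φ/∂z̄ = 0` a.e. on `U` is holomorphic on `U`. -/
theorem weyl_lemma
    (U : Set ℂ) (hU : IsOpen U) (Φ g h : ℂ → ℂ)
    (hcont : ContinuousOn Φ U)
    (hweak : HasWeakDerivsOn U Φ g h)
    (hdbar : ∀ᵐ z ∂(volume.restrict U), (g z + Complex.I * h z) / 2 = 0) :
    DifferentiableOn ℂ Φ U := by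
  intro z₀ hz₀
  obtain ⟨r, hr, hrU⟩ := nhds_basis_closedBall.mem_iff.1 (hU.mem_nhds hz₀)
  -- `Φ` is only continuous on `U`: cut it off so that its convolutions are defined.
  set Φ' := (closedBall z₀ r).indicator Φ
  have hΦ'Φ : EqOn Φ' Φ (closedBall z₀ r) := fun z hz => indicator_of_mem hz Φ
  have hΦ' : Integrable Φ' := ((hcont.mono hrU).integrableOn_compact
    (isCompact_closedBall z₀ r)).integrable_indicator measurableSet_closedBall
  have hsmall : ball z₀ (r / 2) ⊆ closedBall z₀ r :=
    (ball_subset_ball (by linarith)).trans ball_subset_closedBall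
  set b : ℕ → ContDiffBump (0 : ℂ) := ContDiffBump.shrinkingSeq
  have hb : Tendsto (fun n => (b n).rOut) atTop (𝓝 0) := ContDiffBump.tendsto_shrinkingSeq_rOut
  have hconv := ContDiffBump.tendstoLocallyUniformlyOn_normed_convolution hb
    hΦ'.aestronglyMeasurable isOpen_ball ((hcont.mono (hsmall.trans hrU)).congr (hΦ'Φ.mono hsmall))
  have hholo : ∀ᶠ n in atTop,
      DifferentiableOn ℂ ((b n).normed volume ⋆[lsmul ℝ ℝ] Φ') (ball z₀ (r / 2)) := by
    filter_upwards [hb.eventually (gt_mem_nhds (half_pos hr))] with n hn x hx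
    have hxr : closedBall x (b n).rOut ⊆ closedBall z₀ r :=
      closedBall_subset_closedBall' (by rw [mem_ball] at hx; linarith)
    exact ((b n).differentiableAt_normed_convolution_of_hasWeakDerivsOn hU.measurableSet hweak
      hdbar (hxr.trans hrU) hΦ'.locallyIntegrable (hΦ'Φ.mono hxr)).differentiableWithinAt
  have hΦ'_holo := (hconv.differentiableOn hholo isOpen_ball).differentiableAt
    (ball_mem_nhds z₀ (half_pos hr))
  exact (hΦ'_holo.congr_of_eventuallyEq
    (hΦ'Φ.eventuallyEq_of_mem (closedBall_mem_nhds z₀ hr)).symm).differentiableWithinAt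
end
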